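/- Let n ≥ 2 be an integer, let x_1,…,x_n and a_1,…,a_n be complex numbers, let p > 1 and q be real numbers with 1/p + 1/q = 1, and let μ_1,…,μ_n be nonzero real numbers with μ_1 < 0 and μ_i > 0 for i = 2,…,n, and let λ < 0. If |λ|^{1/(p-1)} ≤ |μ_1|^{1/(p-1)}·|a_1|^q − Σ_{i=2}^n |μ_i|^{1/(p-1)}·|a_i|^q, then Σ_{i=1}^n |x_i|^p/μ_i ≥ |Σ_{i=1}^n a_i·x_i|^p / λ. -/

import Mathlib

/-!
Put `S = ∑ aᵢ xᵢ`, so that `a₁ x₁ = S - ∑_{i ≥ 2} aᵢ xᵢ`. Hölder's inequality with the weights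
`|λ|, μ₂, …, μₙ` gives
`|a₁ x₁|^p ≤ (|λ|^{1/(p-1)} + ∑_{i ≥ 2} μᵢ^{1/(p-1)} |aᵢ|^q)^{p-1}`
`             · (|S|^p/|λ| + ∑_{i ≥ 2} |xᵢ|^p/μᵢ)`.
By hypothesis the first factor is at most `(|μ₁|^{1/(p-1)} |a₁|^q)^{p-1} = |μ₁| |a₁|^p`, and
`a₁ ≠ 0` because that bound is positive; cancelling `|a₁|^p` and using `μ₁, λ < 0` gives the claim.
-/

open Finset Real

namespace Real.HolderConjugate

theorem div_conj_eq_one_div_sub_one {p q : ℝ} (hpq : p.HolderConjugate q) :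
    q / p = 1 / (p - 1) := by
  rw [hpq.conjugate_eq]; field_simp [hpq.sub_one_ne_zero, hpq.ne_zero]

theorem mul_rpow_conj_rpow_sub_one {p q : ℝ} (hpq : p.HolderConjugate q) {u v : ℝ}
    (hu : 0 ≤ u) (hv : 0 ≤ v) :
    (u ^ (1 / (p - 1)) * v ^ q) ^ (p - 1) = u * v ^ p := by
  rw [mul_rpow (by positivity) (by positivity), ← rpow_mul hu, ← rpow_mul hv,
    one_div_mul_cancel hpq.sub_one_ne_zero, rpow_one, mul_comm q, hpq.sub_one_mul_conj]

end Real.HolderConjugate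

theorem Finset.norm_sum_mul_rpow_le_weighted {ι R : Type*} [SeminormedRing R] (s : Finset ι)
    (α y : ι → R) {w : ι → ℝ} (hw : ∀ i ∈ s, 0 < w i) {p q : ℝ} (hpq : p.HolderConjugate q) :
    ‖∑ i ∈ s, α i * y i‖ ^ p ≤
      (∑ i ∈ s, w i ^ (1 / (p - 1)) * ‖α i‖ ^ q) ^ (p - 1) * ∑ i ∈ s, ‖y i‖ ^ p / w i := by
  set f : ι → ℝ := fun i ↦ ‖y i‖ / w i ^ (1 / p)
  set g : ι → ℝ := fun i ↦ w i ^ (1 / p) * ‖α i‖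
  have hfg : ∀ i ∈ s, ‖α i * y i‖ ≤ f i * g i := fun i hi ↦ by
    have : w i ^ (1 / p) ≠ 0 := (rpow_pos_of_pos (hw i hi) _).ne'
    calc ‖α i * y i‖ ≤ ‖α i‖ * ‖y i‖ := norm_mul_le _ _
      _ = f i * g i := by simp only [f, g]; field_simp
  have hf : ∀ i ∈ s, f i ^ p = ‖y i‖ ^ p / w i := fun i hi ↦ by
    rw [div_rpow (norm_nonneg _) (rpow_nonneg (hw i hi).le _), ← rpow_mul (hw i hi).le,
      one_div_mul_cancel hpq.ne_zero, rpow_one]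
  have hg : ∀ i ∈ s, g i ^ q = w i ^ (1 / (p - 1)) * ‖α i‖ ^ q := fun i hi ↦ by
    rw [mul_rpow (rpow_nonneg (hw i hi).le _) (norm_nonneg _), ← rpow_mul (hw i hi).le,
      ← hpq.div_conj_eq_one_div_sub_one, one_div_mul_eq_div]
  have holder := inner_le_Lp_mul_Lq_of_nonneg s (f := f) (g := g) hpq
    (fun i hi ↦ div_nonneg (norm_nonneg _) (rpow_nonneg (hw i hi).le _))
    (fun i hi ↦ mul_nonneg (rpow_nonneg (hw i hi).le _) (norm_nonneg _))
  rw [sum_congr rfl hf, sum_congr rfl hg] at holder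
  have hA : 0 ≤ ∑ i ∈ s, ‖y i‖ ^ p / w i :=
    sum_nonneg fun i hi ↦ div_nonneg (by positivity) (hw i hi).le
  have hB : 0 ≤ ∑ i ∈ s, w i ^ (1 / (p - 1)) * ‖α i‖ ^ q :=
    sum_nonneg fun i hi ↦ by have := hw i hi; positivity
  calc ‖∑ i ∈ s, α i * y i‖ ^ p
      ≤ ((∑ i ∈ s, ‖y i‖ ^ p / w i) ^ (1 / p) *
          (∑ i ∈ s, w i ^ (1 / (p - 1)) * ‖α i‖ ^ q) ^ (1 / q)) ^ p := by
        refine rpow_le_rpow (norm_nonneg _) ?_ hpq.nonneg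
        exact (norm_sum_le _ _).trans ((sum_le_sum hfg).trans holder)
    _ = _ := by
        rw [mul_rpow (by positivity) (by positivity), ← rpow_mul hA, ← rpow_mul hB,
          one_div_mul_cancel hpq.ne_zero, rpow_one, one_div_mul_eq_div, hpq.div_conj_eq_sub_one,
          mul_comm]

theorem Finset.norm_sub_sum_mul_rpow_le_weighted {ι R : Type*} [SeminormedRing R]
    [NormOneClass R] (s : Finset ι) (z : R) (α y : ι → R) {l : ℝ} (hl : 0 < l) {w : ι → ℝ}
    (hw : ∀ i ∈ s, 0 < w i) {p q : ℝ} (hpq : p.HolderConjugate q) :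
    ‖z - ∑ i ∈ s, α i * y i‖ ^ p ≤
      (l ^ (1 / (p - 1)) + ∑ i ∈ s, w i ^ (1 / (p - 1)) * ‖α i‖ ^ q) ^ (p - 1) *
        (‖z‖ ^ p / l + ∑ i ∈ s, ‖y i‖ ^ p / w i) := by
  have := s.insertNone.norm_sum_mul_rpow_le_weighted (fun o ↦ o.elim 1 fun i ↦ -α i)
    (fun o ↦ o.elim z y) (w := fun o ↦ o.elim l w)
    (forall_mem_insertNone.2 ⟨hl, hw⟩) hpq
  simpa [sum_insertNone, sub_eq_add_neg] using this

theorem Finset.norm_rpow_div_le_of_weight_sum_le {ι R : Type*} [SeminormedRing R]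
    [NormOneClass R] [NormMulClass R] (s : Finset ι) (a x : ι → R) (a₀ x₀ : R) {l m : ℝ}
    (hl : 0 < l) (hm : 0 < m) {μ : ι → ℝ}
    (hμ : ∀ i ∈ s, 0 < μ i) {p q : ℝ} (hpq : p.HolderConjugate q)
    (h : l ^ (1 / (p - 1)) + ∑ i ∈ s, μ i ^ (1 / (p - 1)) * ‖a i‖ ^ q ≤
      m ^ (1 / (p - 1)) * ‖a₀‖ ^ q) :
    ‖x₀‖ ^ p / m ≤ ‖a₀ * x₀ + ∑ i ∈ s, a i * x i‖ ^ p / l + ∑ i ∈ s, ‖x i‖ ^ p / μ i := by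
  set T := ‖a₀ * x₀ + ∑ i ∈ s, a i * x i‖ ^ p / l + ∑ i ∈ s, ‖x i‖ ^ p / μ i
  have hT : 0 ≤ T :=
    add_nonneg (by positivity) (sum_nonneg fun i hi ↦ div_nonneg (by positivity) (hμ i hi).le)
  have hweights : 0 < l ^ (1 / (p - 1)) + ∑ i ∈ s, μ i ^ (1 / (p - 1)) * ‖a i‖ ^ q :=
    add_pos_of_pos_of_nonneg (by positivity) (sum_nonneg fun i hi ↦ by have := hμ i hi; positivity)
  have ha₀ : 0 < ‖a₀‖ ^ p := by
    have hK : 0 < m ^ (1 / (p - 1)) * ‖a₀‖ ^ q := hweights.trans_le h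
    refine rpow_pos_of_pos ((norm_nonneg a₀).lt_of_ne fun h0 ↦ ?_) p
    simp [← h0, zero_rpow hpq.symm.ne_zero] at hK
  have holder := s.norm_sub_sum_mul_rpow_le_weighted (a₀ * x₀ + ∑ i ∈ s, a i * x i) a x hl hμ hpq
  rw [add_sub_cancel_right] at holder
  have hscaled : ‖a₀‖ ^ p * ‖x₀‖ ^ p ≤ ‖a₀‖ ^ p * (m * T) := calc
    ‖a₀‖ ^ p * ‖x₀‖ ^ p = ‖a₀ * x₀‖ ^ p := by
      rw [norm_mul, mul_rpow (norm_nonneg _) (norm_nonneg _)]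
    _ ≤ (l ^ (1 / (p - 1)) + ∑ i ∈ s, μ i ^ (1 / (p - 1)) * ‖a i‖ ^ q) ^ (p - 1) * T := holder
    _ ≤ (m ^ (1 / (p - 1)) * ‖a₀‖ ^ q) ^ (p - 1) * T := by
      gcongr
      exact hpq.sub_one_pos.le
    _ = ‖a₀‖ ^ p * (m * T) := by rw [hpq.mul_rpow_conj_rpow_sub_one hm.le (norm_nonneg _)]; ring
  rw [div_le_iff₀ hm, mul_comm]
  exact le_of_mul_le_mul_left hscaled ha₀

theorem Fin.sum_univ_erase_zero {M : Type*} [AddCommGroup M] {n : ℕ} (f : Fin (n + 1) → M) :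
    ∑ i ∈ univ.erase 0, f i = ∑ i : Fin n, f i.succ := by
  rw [sum_erase_eq_sub (mem_univ 0), Fin.sum_univ_succ, add_sub_cancel_left]

open Finset in
/-- Theorem 2, Case (iii): n-term (n ≥ 2, here n + 2 indices) Bohr type inequality for
complex numbers with μ_1 < 0, μ_i > 0 for i ≥ 2 and λ < 0. -/
theorem bohr_type_complex_n_case_iii (n : ℕ) (x a : Fin (n + 2) → ℂ) (p q : ℝ)
    (hp : 1 < p) (hpq : 1 / p + 1 / q = 1) (μ : Fin (n + 2) → ℝ)
    (hμ1 : μ 0 < 0) (hμi : ∀ i, i ≠ 0 → 0 < μ i) (lam : ℝ) (hlam : lam < 0)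
    (h : |lam| ^ (1 / (p - 1)) ≤ |μ 0| ^ (1 / (p - 1)) * ‖a 0‖ ^ q -
      ∑ i ∈ univ.erase 0, |μ i| ^ (1 / (p - 1)) * ‖a i‖ ^ q) :
    ∑ i, ‖x i‖ ^ p / μ i ≥ ‖∑ i, a i * x i‖ ^ p / lam := by
  have hpq' : p.HolderConjugate q := Real.holderConjugate_iff.mpr ⟨hp, by simpa using hpq⟩
  have hμ : ∀ i : Fin (n + 1), 0 < μ i.succ := fun i ↦ hμi _ i.succ_ne_zero
  simp only [Fin.sum_univ_erase_zero, abs_of_pos (hμ _)] at h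
  have hbohr := (univ : Finset (Fin (n + 1))).norm_rpow_div_le_of_weight_sum_le
    (fun i ↦ a i.succ) (fun i ↦ x i.succ) (a 0) (x 0) (abs_pos.2 hlam.ne) (abs_pos.2 hμ1.ne)
    (fun i _ ↦ hμ i) hpq' (by linarith)
  rw [abs_of_neg hμ1, abs_of_neg hlam, div_neg, div_neg] at hbohr
  simp only [ge_iff_le, Fin.sum_univ_succ (n := n + 1)]
  linarith
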